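/- Let S be a nonempty semigroup such that S \ E(S) is finite. Suppose x_1, ..., x_k are distinct elements of S such that: each cyclic subsemigroup ⟨x_i⟩ is finite with index I(x_i) ≡ 1 (mod P(x_i)); x_i * x_j = x_j * x_i = x_j for all 1 ≤ i < j ≤ k; the sets of non-idempotent elements of the ⟨x_i⟩ are pairwise disjoint; and every element of S outside ⋃_{i=1}^k ⟨x_i⟩ is an idempotent. Let T be the S-valued sequence in which each x_i occurs exactly I(x_i) + P(x_i) − 2 times and no other element occurs. Then T has length |S \ E(S)| and Π(T) ∩ E(S) = ∅. -/

import Mathlib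

/-- Product, in order, of the nonempty list `a :: l` in a semigroup. -/
def sprod {S : Type*} [Mul S] (a : S) (l : List S) : S := l.foldl (· * ·) a

/-- `pow1 x n = x^(n+1)`: the `(n+1)`-st power of `x` in a semigroup. -/
def pow1 {S : Type*} [Mul S] (x : S) : ℕ → S := fun n => Nat.rec x (fun _ y => y * x) n

/-- `Π(T)`: the set of products, in order, of nonempty lists which are
permutations of order-preserving sublists of `T`. -/
def PiSet {S : Type*} [Mul S] (T : List S) : Set S :=
  {s | ∃ u : List S, u.Sublist T ∧ ∃ a l, (a :: l).Perm u ∧ sprod a l = s}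

/-- `A(L)`: the set of products, in order, of nonempty order-preserving sublists of `L`. -/
def ASet {S : Type*} [Mul S] (L : List S) : Set S :=
  {s | ∃ a l, (a :: l).Sublist L ∧ sprod a l = s}

/-- `HasIndexPeriod x r p` says that `r` is the index of `x` (the least `r > 0` such
that `x^r = x^t` for some positive `t ≠ r`) and `p` is the period of `x` (the least
`p > 0` with `x^(r+p) = x^r`). Powers are expressed via `pow1 x (n-1) = x^n`. -/
def HasIndexPeriod {S : Type*} [Mul S] (x : S) (r p : ℕ) : Prop :=
  (0 < r ∧ (∃ t, 0 < t ∧ t ≠ r ∧ pow1 x (t - 1) = pow1 x (r - 1)) ∧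
    ∀ r', 0 < r' → (∃ t, 0 < t ∧ t ≠ r' ∧ pow1 x (t - 1) = pow1 x (r' - 1)) → r ≤ r') ∧
  (0 < p ∧ pow1 x (r + p - 1) = pow1 x (r - 1) ∧
    ∀ p', 0 < p' → pow1 x (r + p' - 1) = pow1 x (r - 1) → p ≤ p')


/-!
The non-idempotent elements of `S` are the non-idempotent powers of the `x_i`. Since
`I(x_i) ≡ 1 (mod P(x_i))`, the only idempotent among `x_i, …, x_i^(I+P-1)` is the last one, so
`⟨x_i⟩` has exactly `I(x_i) + P(x_i) - 2` non-idempotents, which gives the length of `T`.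
Because `x_j` absorbs every `x_i` with `i < j` on both sides, a product of terms of `T` equals
`x_j^c`, where `j` is the largest index occurring and `c ≤ I(x_j) + P(x_j) - 2` is the number of
occurrences of `x_j`; such a power is not idempotent.
-/

open Function

theorem List.length_eq_sum_count_comp {S ι : Type*} [Fintype ι] [DecidableEq S] {x : ι → S}
    (hx : Injective x) {T : List S} (hT : ∀ s ∈ T, s ∈ Set.range x) :
    T.length = ∑ i, T.count (x i) := by
  have := Multiset.sum_count_eq_card (s := Finset.univ.map ⟨x, hx⟩) (m := (T : Multiset S))
    (by simpa using hT)
  simpa using this.symm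

theorem sprod_append_singleton {S : Type*} [Mul S] (a b : S) (l : List S) :
    sprod a (l ++ [b]) = sprod a l * b := by
  simp [sprod]

theorem setOf_mul_self_ne_eq_iUnion {S ι : Type*} [Mul S] (A : ι → Set S)
    (hA : ∀ s, s ∉ ⋃ i, A i → s * s = s) :
    {s : S | s * s ≠ s} = ⋃ i, {y ∈ A i | y * y ≠ y} := by
  ext s
  simp only [Set.mem_ofPred_eq, Set.mem_iUnion]
  refine ⟨fun hs => ?_, fun ⟨_, _, hs⟩ => hs⟩
  obtain ⟨i, hi⟩ := Set.mem_iUnion.mp (not_imp_comm.mp (hA s) hs)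
  exact ⟨i, hi, hs⟩

section Semigroup

variable {S : Type*} [Semigroup S]

theorem pow1_succ (x : S) (n : ℕ) : pow1 x (n + 1) = pow1 x n * x := rfl

theorem pow1_eq_iterate (x : S) (n : ℕ) : pow1 x n = (· * x)^[n] x := by
  induction n with
  | zero => rfl
  | succ n ih => rw [pow1_succ, ih, iterate_succ_apply']

theorem pow1_add (x : S) (a b : ℕ) : pow1 x (a + b + 1) = pow1 x a * pow1 x b := by
  induction b with
  | zero => rfl
  | succ b ih => rw [← add_assoc, pow1_succ, ih, pow1_succ, mul_assoc]

theorem pow1_mul_of_mul_eq_left {y z : S} (h : y * z = y) (n : ℕ) : pow1 y n * z = pow1 y n := by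
  induction n with
  | zero => exact h
  | succ n _ => rw [pow1_succ, mul_assoc, h]

theorem pow1_mul_of_mul_eq_right {y z : S} (h : y * z = z) (n : ℕ) : pow1 y n * z = z := by
  induction n with
  | zero => exact h
  | succ n ih => rw [pow1_succ, mul_assoc, h, ih]

namespace HasIndexPeriod

variable {x : S} {r p : ℕ} (h : HasIndexPeriod x r p)
include h

theorem index_pos : 0 < r := h.1.1

theorem period_pos : 0 < p := h.2.1

theorem le_of_pow1_eq {a b : ℕ} (hab : pow1 x a = pow1 x b) (hne : a ≠ b) : r - 1 ≤ a := by
  have := h.1.2.2 (a + 1) a.succ_pos ⟨b + 1, b.succ_pos, by omega, by simpa using hab.symm⟩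
  omega

/-- The powers `x^n` with `n ≥ r` run around the orbit of `x^r` under right multiplication by
`x`, which is a cycle of length `p`. -/
theorem minimalPeriod_eq : minimalPeriod (· * x) (pow1 x (r - 1)) = p := by
  have hper : IsPeriodicPt (· * x) p (pow1 x (r - 1)) := by
    have := h.2.2.1
    rwa [show r + p - 1 = p + (r - 1) by have := h.index_pos; omega, pow1_eq_iterate,
      iterate_add_apply, ← pow1_eq_iterate] at this
  refine le_antisymm (hper.minimalPeriod_le h.period_pos) (h.2.2.2 _ ?_ ?_)
  · exact minimalPeriod_pos_of_mem_periodicPts (mk_mem_periodicPts h.period_pos hper)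
  · rw [show r + minimalPeriod (· * x) (pow1 x (r - 1)) - 1 =
        minimalPeriod (· * x) (pow1 x (r - 1)) + (r - 1) by have := h.index_pos; omega,
      pow1_eq_iterate, iterate_add_apply, ← pow1_eq_iterate, iterate_minimalPeriod]

theorem pow1_add_eq_pow1_add_iff {d e : ℕ} :
    pow1 x (r - 1 + d) = pow1 x (r - 1 + e) ↔ d ≡ e [MOD p] := by
  have hp : 0 < minimalPeriod (· * x) (pow1 x (r - 1)) := h.minimalPeriod_eq ▸ h.period_pos
  rw [pow1_eq_iterate, pow1_eq_iterate, add_comm, iterate_add_apply, add_comm,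
    iterate_add_apply, ← pow1_eq_iterate, ← iterate_mod_minimalPeriod_eq,
    ← iterate_mod_minimalPeriod_eq (n := e), iterate_eq_iterate_iff_of_lt_minimalPeriod
      (Nat.mod_lt _ hp) (Nat.mod_lt _ hp), h.minimalPeriod_eq]
  rfl

theorem injOn_pow1 : Set.InjOn (pow1 x) (Set.Iio (r + p - 1)) := by
  intro a ha b hb hab
  by_contra hne
  obtain ⟨d, rfl⟩ := Nat.exists_eq_add_of_le (h.le_of_pow1_eq hab hne)
  obtain ⟨e, rfl⟩ := Nat.exists_eq_add_of_le (h.le_of_pow1_eq hab.symm (Ne.symm hne))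
  have hde : d % p = e % p := h.pow1_add_eq_pow1_add_iff.mp hab
  simp only [Set.mem_Iio] at ha hb
  rw [Nat.mod_eq_of_lt (by omega), Nat.mod_eq_of_lt (by omega)] at hde
  omega

theorem exists_lt_pow1_eq (m : ℕ) : ∃ n < r + p - 1, pow1 x n = pow1 x m := by
  by_cases hm : m < r - 1
  · exact ⟨m, by omega, rfl⟩
  · obtain ⟨d, rfl⟩ := Nat.exists_eq_add_of_le (not_lt.mp hm)
    refine ⟨r - 1 + d % p, ?_, h.pow1_add_eq_pow1_add_iff.mpr (Nat.mod_modEq d p)⟩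
    have := Nat.mod_lt d h.period_pos
    have := h.index_pos
    omega

/-- `x^(m+1)` is idempotent iff `2(m+1) ≡ m+1` beyond the index, i.e. iff `p ∣ m + 1`; as
`p ∣ r - 1`, the first such exponent is `r + p - 1`. -/
theorem isIdempotentElem_pow1_iff (hdvd : p ∣ r - 1) {m : ℕ} (hm : m < r + p - 1) :
    IsIdempotentElem (pow1 x m) ↔ m = r + p - 2 := by
  have hr := h.index_pos
  have hp := h.period_pos
  rw [IsIdempotentElem, ← pow1_add]
  constructor
  · intro hid
    obtain ⟨d, rfl⟩ := Nat.exists_eq_add_of_le (h.le_of_pow1_eq hid.symm (by omega))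
    have hmod : r - 1 + d + 1 + d ≡ 0 + d [MOD p] :=
      h.pow1_add_eq_pow1_add_iff.mp (by convert hid using 2 <;> omega)
    have hdvd' : p ∣ r - 1 + (d + 1) :=
      Nat.modEq_zero_iff_dvd.mp (by simpa [add_assoc] using hmod.add_right_cancel' d)
    have := Nat.le_of_dvd (by omega) ((Nat.dvd_add_right hdvd).mp hdvd')
    omega
  · rintro rfl
    have : p - 1 + (r - 1 + p) ≡ p - 1 + 0 [MOD p] :=
      Nat.ModEq.add_left _ (Nat.modEq_zero_iff_dvd.mpr (Nat.dvd_add hdvd dvd_rfl))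
    convert h.pow1_add_eq_pow1_add_iff.mpr this using 2 <;> omega

theorem nonidempotents_range_pow1_eq [DecidableEq S] (hdvd : p ∣ r - 1) :
    {y ∈ Set.range (pow1 x) | y * y ≠ y} =
      ((Finset.range (r + p - 2)).image (pow1 x) : Set S) := by
  ext y
  simp only [Set.mem_ofPred_eq, Set.mem_range, Finset.coe_image, Finset.coe_range, Set.mem_image,
    Set.mem_Iio]
  constructor
  · rintro ⟨⟨m, rfl⟩, hy⟩
    obtain ⟨n, hn, hnm⟩ := h.exists_lt_pow1_eq m
    rw [← hnm] at hy ⊢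
    refine ⟨n, lt_of_le_of_ne (by omega) fun hn' => hy ?_, rfl⟩
    exact (h.isIdempotentElem_pow1_iff hdvd hn).mpr (by omega)
  · rintro ⟨m, hm, rfl⟩
    refine ⟨⟨m, rfl⟩, fun hid => ?_⟩
    have := (h.isIdempotentElem_pow1_iff hdvd (by omega)).mp hid
    omega

theorem card_image_pow1_range [DecidableEq S] :
    ((Finset.range (r + p - 2)).image (pow1 x)).card = r + p - 2 := by
  rw [Finset.card_image_of_injOn, Finset.card_range]
  refine h.injOn_pow1.mono fun m hm => ?_
  simp only [Finset.coe_range, Set.mem_Iio] at hm ⊢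
  omega

end HasIndexPeriod

section Absorbing

variable {ι : Type*} [LinearOrder ι] {x : ι → S} [DecidableEq S] (hx : Injective x)
  (habs : ∀ i j, i < j → x i * x j = x j ∧ x j * x i = x j)

include hx habs

theorem exists_sprod_eq_pow1_count (a : S) (l : List S) (hl : ∀ s ∈ a :: l, s ∈ Set.range x) :
    ∃ j, x j ∈ a :: l ∧ (∀ i, x i ∈ a :: l → i ≤ j) ∧
      sprod a l = pow1 (x j) ((a :: l).count (x j) - 1) := by
  induction l using List.reverseRecOn with
  | nil =>
    obtain ⟨j, rfl⟩ := hl a (by simp)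
    exact ⟨j, by simp, fun i hi => (hx (by simpa using hi)).le, by simp [sprod]; rfl⟩
  | append_singleton l b ih =>
    obtain ⟨i, rfl⟩ := hl b (by simp)
    obtain ⟨j, hj, hmax, hprod⟩ := ih fun s hs => hl s (List.mem_append_left [x i] hs)
    rw [← List.cons_append]
    simp only [List.mem_append, List.mem_singleton, List.count_append, List.count_singleton,
      beq_iff_eq, hx.eq_iff, sprod_append_singleton, hprod]
    have hc : 0 < (a :: l).count (x j) := List.count_pos_iff.mpr hj
    rcases lt_trichotomy i j with hij | rfl | hji
    · refine ⟨j, .inl hj, fun i' hi' => hi'.elim (hmax i') (fun h => h ▸ hij.le), ?_⟩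
      rw [if_neg hij.ne, add_zero, pow1_mul_of_mul_eq_left (habs i j hij).2]
    · refine ⟨i, .inl hj, fun i' hi' => hi'.elim (hmax i') le_of_eq, ?_⟩
      rw [if_pos rfl, ← pow1_succ]
      congr 1
      omega
    · have hi : x i ∉ a :: l := fun h => (hmax i h).not_gt hji
      refine ⟨i, .inr rfl, fun i' hi' => hi'.elim (fun h => (hmax i' h).trans hji.le) le_of_eq,
        ?_⟩
      rw [List.count_eq_zero.mpr hi, if_pos rfl, pow1_mul_of_mul_eq_right (habs j i hji).1]
      rfl

theorem exists_pow1_of_mem_PiSet {T : List S} (hT : ∀ s ∈ T, s ∈ Set.range x) {s : S}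
    (hs : s ∈ PiSet T) : ∃ j, ∃ m < T.count (x j), s = pow1 (x j) m := by
  obtain ⟨u, hu, a, l, hperm, rfl⟩ := hs
  obtain ⟨j, hj, -, hprod⟩ :=
    exists_sprod_eq_pow1_count hx habs a l fun s hs => hT s (hu.subset (hperm.subset hs))
  refine ⟨j, _, ?_, hprod⟩
  have := List.count_pos_iff.mpr hj
  have := (hperm.count_eq (x j)).trans_le (hu.count_le (x j))
  omega

end Absorbing

end Semigroup

theorem stmt_12_general {S : Type*} [Semigroup S] [DecidableEq S]
    (k : ℕ) (x : Fin k → S) (hinj : Function.Injective x)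
    (r p : Fin k → ℕ)
    (hip : ∀ i, HasIndexPeriod (x i) (r i) (p i))
    (hmod : ∀ i, r i ≡ 1 [MOD p i])
    (hmul : ∀ i j, i < j → x i * x j = x j ∧ x j * x i = x j)
    (hdisj : ∀ i j, i ≠ j →
      {y ∈ Set.range (pow1 (x i)) | y * y ≠ y}
        ∩ {y ∈ Set.range (pow1 (x j)) | y * y ≠ y} = ∅)
    (hout : ∀ s : S, s ∉ ⋃ i, Set.range (pow1 (x i)) → s * s = s)
    (T : List S)
    (hcount : ∀ i, T.count (x i) = r i + p i - 2)
    (hsupp : ∀ s ∈ T, ∃ i, s = x i) :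
    T.length = {x : S | x * x ≠ x}.ncard ∧ PiSet T ∩ {e : S | e * e = e} = ∅ := by
  have hdvd i : p i ∣ r i - 1 := (Nat.modEq_iff_dvd' (hip i).index_pos).mp (hmod i).symm
  set N : Fin k → Finset S := fun i => (Finset.range (r i + p i - 2)).image (pow1 (x i))
  have hN i : {y ∈ Set.range (pow1 (x i)) | y * y ≠ y} = N i :=
    (hip i).nonidempotents_range_pow1_eq (hdvd i)
  have hnonidem : {s : S | s * s ≠ s} = ↑(Finset.univ.biUnion N) := by
    simp only [setOf_mul_self_ne_eq_iUnion _ hout, hN, Finset.coe_biUnion, Finset.coe_univ,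
      Set.mem_univ, Set.iUnion_true]
  have hT : ∀ s ∈ T, s ∈ Set.range x := fun s hs => (hsupp s hs).imp fun _ => Eq.symm
  constructor
  · rw [List.length_eq_sum_count_comp hinj hT, hnonidem, Set.ncard_coe_finset, Finset.card_biUnion]
    · simp [hcount, N, (hip _).card_image_pow1_range]
    · intro i _ j _ hij
      rw [Function.onFun, ← Finset.disjoint_coe, ← hN, ← hN, Set.disjoint_iff_inter_eq_empty]
      exact hdisj i j hij
  · refine Set.eq_empty_of_forall_notMem fun s ⟨hs, hid⟩ => ?_
    obtain ⟨j, m, hm, rfl⟩ := exists_pow1_of_mem_PiSet hinj hmul hT hs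
    have := (hip j).index_pos
    have := hcount j
    exact absurd (((hip j).isIdempotentElem_pow1_iff (hdvd j) (by omega)).mp hid) (by omega)

/-- Sufficiency: a sequence built from elements `x_1, …, x_k` as in the main theorem
(with `x_i` occurring `I(x_i) + P(x_i) - 2` times) has length `|S \ E(S)|` and is
idempotent-product free. -/
theorem stmt_12 {S : Type*} [Semigroup S] [Nonempty S] [DecidableEq S]
    (hfin : {x : S | x * x ≠ x}.Finite)
    (k : ℕ) (x : Fin k → S) (hinj : Function.Injective x)
    (r p : Fin k → ℕ)
    (hcyc : ∀ i, (Set.range (pow1 (x i))).Finite)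
    (hip : ∀ i, HasIndexPeriod (x i) (r i) (p i))
    (hmod : ∀ i, r i ≡ 1 [MOD p i])
    (hmul : ∀ i j, i < j → x i * x j = x j ∧ x j * x i = x j)
    (hdisj : ∀ i j, i ≠ j →
      {y ∈ Set.range (pow1 (x i)) | y * y ≠ y}
        ∩ {y ∈ Set.range (pow1 (x j)) | y * y ≠ y} = ∅)
    (hout : ∀ s : S, s ∉ ⋃ i, Set.range (pow1 (x i)) → s * s = s)
    (T : List S)
    (hcount : ∀ i, T.count (x i) = r i + p i - 2)
    (hsupp : ∀ s ∈ T, ∃ i, s = x i) :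
    T.length = {x : S | x * x ≠ x}.ncard ∧ PiSet T ∩ {e : S | e * e = e} = ∅ :=
  stmt_12_general k x hinj r p hip hmod hmul hdisj hout T hcount hsupp
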